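/- arXiv:1111.6745 — 3 statements merged into one kernel-verified Lean document; each statement's English description precedes it below -/
import Mathlib

section
/- Under the reduction-set hypotheses, if a k-partition of the n vertices cuts at most α·m edges and induces fewer than p − ε·n minority vertices, and the 3-PARTITION instance has no solution, then some colour class has fewer than n/k − ε·n vertices. -/
open Finset

/-- Reduction-set counting step: `cnt i j` is the number of vertices of gadget `i`
coloured `j`; `M i` is the majority colour of gadget `i`. If the total number of minority
vertices is `< p - ε·n` and the majority colours do not form a valid 3-PARTITION solution,
then some colour class has fewer than `p·(s-1) + p - ε·n ≤ n/k - ε·n` vertices. -/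
theorem stmt_8 (k s p : ℕ) (hk : 0 < k) (hs : 0 < s) (hp : 0 < p)
    (a : Fin (3 * k) → ℕ)
    (hlo : ∀ i, s < 4 * a i) (hhi : ∀ i, 2 * a i < s)
    (hsum : ∑ i, a i = k * s)
    (n : ℕ) (hn : n = p * k * s)
    (ε : ℝ) (hε : 0 ≤ ε)
    (cnt : Fin (3 * k) → Fin k → ℕ)
    (hcnt : ∀ i, ∑ j, cnt i j = p * a i)
    (M : Fin (3 * k) → Fin k)
    (hM : ∀ i, p * a i < 2 * cnt i (M i))
    (hminor : ((∑ i, (p * a i - cnt i (M i)) : ℕ) : ℝ) < (p : ℝ) - ε * n)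
    (hnotsol : ¬ ∀ j : Fin k, ∑ i ∈ univ.filter (fun i => M i = j), a i = s) :
    ∃ j : Fin k,
      ((∑ i, cnt i j : ℕ) : ℝ) < (p : ℝ) * ((s : ℝ) - 1) + p - ε * n ∧
      (p : ℝ) * ((s : ℝ) - 1) + p - ε * n ≤ (n : ℝ) / k - ε * n := by
  set f : Fin k → ℕ := fun j => ∑ i ∈ univ.filter (fun i => M i = j), a i with hf
  have hfsum : ∑ j, f j = k * s := by
    rw [← hsum]
    exact Finset.sum_fiberwise univ M a
  -- some colour has f j < s
  have hjlt : ∃ j, f j < s := by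
    by_contra h
    push_neg at h
    obtain ⟨j0, hj0⟩ := not_forall.mp hnotsol
    have hj0' : s < f j0 := lt_of_le_of_ne (h j0) (Ne.symm hj0)
    have : ∑ j, s < ∑ j, f j :=
      Finset.sum_lt_sum (fun j _ => h j) ⟨j0, Finset.mem_univ j0, hj0'⟩
    simp [Finset.sum_const, hfsum, mul_comm] at this
  obtain ⟨j, hj⟩ := hjlt
  refine ⟨j, ?_, ?_⟩
  · -- counting bound
    have key : ∑ i, cnt i j ≤ p * f j + ∑ i, (p * a i - cnt i (M i)) := by
      rw [← Finset.sum_filter_add_sum_filter_not univ (fun i => M i = j) (fun i => cnt i j)]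
      have h1 : ∑ i ∈ univ.filter (fun i => M i = j), cnt i j ≤ p * f j := by
        rw [hf, Finset.mul_sum]
        apply Finset.sum_le_sum
        intro i _
        rw [← hcnt i]
        exact Finset.single_le_sum (fun j' _ => Nat.zero_le _) (Finset.mem_univ j)
      have h2 : ∑ i ∈ univ.filter (fun i => ¬ M i = j), cnt i j
          ≤ ∑ i, (p * a i - cnt i (M i)) := by
        calc ∑ i ∈ univ.filter (fun i => ¬ M i = j), cnt i j
            ≤ ∑ i ∈ univ.filter (fun i => ¬ M i = j), (p * a i - cnt i (M i)) := by
              apply Finset.sum_le_sum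
              intro i hi
              have hij : ¬ M i = j := (Finset.mem_filter.mp hi).2
              apply Nat.le_sub_of_add_le
              rw [← hcnt i, ← Finset.sum_pair (fun h => hij h.symm)]
              exact Finset.sum_le_sum_of_subset (Finset.subset_univ _)
          _ ≤ ∑ i, (p * a i - cnt i (M i)) :=
              Finset.sum_le_sum_of_subset (Finset.filter_subset _ _)
      omega
    have hfj : (f j : ℝ) ≤ (s : ℝ) - 1 := by
      have : f j ≤ s - 1 := Nat.le_sub_one_of_lt hj
      have := (Nat.cast_le (α := ℝ)).mpr this
      rwa [Nat.cast_sub hs, Nat.cast_one] at this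
    calc ((∑ i, cnt i j : ℕ) : ℝ)
        ≤ (p : ℝ) * f j + ((∑ i, (p * a i - cnt i (M i)) : ℕ) : ℝ) := by
          exact_mod_cast (Nat.cast_le (α := ℝ)).mpr key
      _ < (p : ℝ) * ((s : ℝ) - 1) + ((p : ℝ) - ε * n) := by
          apply add_lt_add_of_le_of_lt _ hminor
          exact mul_le_mul_of_nonneg_left hfj (by positivity)
      _ = (p : ℝ) * ((s : ℝ) - 1) + p - ε * n := by ring
  · have hk' : (k : ℝ) ≠ 0 := Nat.cast_ne_zero.mpr hk.ne'
    have heq : ((n : ℝ)) / k = (p : ℝ) * s := by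
      rw [hn]; push_cast; field_simp
    rw [heq]
    nlinarith [hε]
end

section
/- In a w × h rectangular grid graph with both w > B and h > B, any edge cut of size at most B that disconnects the grid leaves a smallest component of at most (B/2)² vertices. -/
open SimpleGraph

def gridRel (w h : ℕ) (u v : Fin w × Fin h) : Prop :=
  (u.1 = v.1 ∧ (v.2 : ℕ) = (u.2 : ℕ) + 1) ∨ (u.2 = v.2 ∧ (v.1 : ℕ) = (u.1 : ℕ) + 1)

section aux
variable {w h : ℕ} {F : Finset (Sym2 (Fin w × Fin h))}

lemma grid_col_adj (x : Fin w)
    (hsafe : ∀ u v : Fin w × Fin h, s(u,v) ∈ F → u.1 = x → v.1 = x → False)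
    (y y' : Fin h) (hyy : (y' : ℕ) = (y : ℕ) + 1) :
    ((SimpleGraph.fromRel (gridRel w h)).deleteEdges ↑F).Adj (x, y) (x, y') := by
  rw [SimpleGraph.deleteEdges_adj]
  refine ⟨?_, ?_⟩
  · rw [SimpleGraph.fromRel_adj]
    refine ⟨fun hc => ?_, Or.inl (Or.inl ⟨rfl, hyy⟩)⟩
    have : y = y' := (Prod.ext_iff.mp hc).2
    subst this; omega
  · simp only [Finset.mem_coe]
    intro hFmem
    exact hsafe _ _ hFmem rfl rfl

lemma grid_row_adj (y : Fin h)
    (hsafe : ∀ u v : Fin w × Fin h, s(u,v) ∈ F → u.2 = y → v.2 = y → False)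
    (x x' : Fin w) (hxx : (x' : ℕ) = (x : ℕ) + 1) :
    ((SimpleGraph.fromRel (gridRel w h)).deleteEdges ↑F).Adj (x, y) (x', y) := by
  rw [SimpleGraph.deleteEdges_adj]
  refine ⟨?_, ?_⟩
  · rw [SimpleGraph.fromRel_adj]
    refine ⟨fun hc => ?_, Or.inl (Or.inr ⟨rfl, hxx⟩)⟩
    have : x = x' := (Prod.ext_iff.mp hc).1
    subst this; omega
  · simp only [Finset.mem_coe]
    intro hFmem
    exact hsafe _ _ hFmem rfl rfl

lemma grid_col_reach (x : Fin w)
    (hsafe : ∀ u v : Fin w × Fin h, s(u,v) ∈ F → u.1 = x → v.1 = x → False)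
    (y y' : Fin h) :
    ((SimpleGraph.fromRel (gridRel w h)).deleteEdges ↑F).Reachable (x, y) (x, y') := by
  have key : ∀ (d a : ℕ) (ha : a < h) (hb : a + d < h),
      ((SimpleGraph.fromRel (gridRel w h)).deleteEdges ↑F).Reachable
        (x, ⟨a, ha⟩) (x, ⟨a + d, hb⟩) := by
    intro d
    induction d with
    | zero => intro a ha hb; exact Reachable.refl _
    | succ n ih =>
        intro a ha hb
        refine (ih a ha (by omega)).trans (Adj.reachable ?_)
        exact grid_col_adj x hsafe ⟨a + n, by omega⟩ ⟨a + (n + 1), hb⟩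
          (by show a + (n + 1) = a + n + 1; omega)
  have key2 : ∀ (a b : Fin h), (a : ℕ) ≤ (b : ℕ) →
      ((SimpleGraph.fromRel (gridRel w h)).deleteEdges ↑F).Reachable (x, a) (x, b) := by
    rintro ⟨a, ha⟩ ⟨b, hb⟩ hab
    simp only [Fin.val_mk] at hab
    have h1 := key (b - a) a ha (by omega)
    have h2 : (⟨a + (b - a), by omega⟩ : Fin h) = ⟨b, hb⟩ := Fin.ext (by simp; omega)
    rwa [h2] at h1
  rcases le_total (y : ℕ) (y' : ℕ) with hle | hle
  · exact key2 y y' hle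
  · exact (key2 y' y hle).symm

lemma grid_row_reach (y : Fin h)
    (hsafe : ∀ u v : Fin w × Fin h, s(u,v) ∈ F → u.2 = y → v.2 = y → False)
    (x x' : Fin w) :
    ((SimpleGraph.fromRel (gridRel w h)).deleteEdges ↑F).Reachable (x, y) (x', y) := by
  have key : ∀ (d a : ℕ) (ha : a < w) (hb : a + d < w),
      ((SimpleGraph.fromRel (gridRel w h)).deleteEdges ↑F).Reachable
        (⟨a, ha⟩, y) (⟨a + d, hb⟩, y) := by
    intro d
    induction d with
    | zero => intro a ha hb; exact Reachable.refl _
    | succ n ih =>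
        intro a ha hb
        refine (ih a ha (by omega)).trans (Adj.reachable ?_)
        exact grid_row_adj y hsafe ⟨a + n, by omega⟩ ⟨a + (n + 1), hb⟩
          (by show a + (n + 1) = a + n + 1; omega)
  have key2 : ∀ (a b : Fin w), (a : ℕ) ≤ (b : ℕ) →
      ((SimpleGraph.fromRel (gridRel w h)).deleteEdges ↑F).Reachable (a, y) (b, y) := by
    rintro ⟨a, ha⟩ ⟨b, hb⟩ hab
    simp only [Fin.val_mk] at hab
    have h1 := key (b - a) a ha (by omega)
    have h2 : (⟨a + (b - a), by omega⟩ : Fin w) = ⟨b, hb⟩ := Fin.ext (by simp; omega)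
    rwa [h2] at h1
  rcases le_total (x : ℕ) (x' : ℕ) with hle | hle
  · exact key2 x x' hle
  · exact (key2 x' x hle).symm
end aux

section aux2
variable {w h : ℕ}

noncomputable def rowOfEdge (w h : ℕ) : Sym2 (Fin w × Fin h) → Option (Fin h) :=
  Sym2.lift ⟨fun u v => if u.2 = v.2 then some u.2 else none, by
    intro u v
    dsimp only
    by_cases hEq : u.2 = v.2
    · rw [if_pos hEq, if_pos hEq.symm, hEq]
    · rw [if_neg hEq, if_neg (fun hc => hEq hc.symm)]⟩

noncomputable def colOfEdge (w h : ℕ) : Sym2 (Fin w × Fin h) → Option (Fin w) :=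
  Sym2.lift ⟨fun u v => if u.1 = v.1 then some u.1 else none, by
    intro u v
    dsimp only
    by_cases hEq : u.1 = v.1
    · rw [if_pos hEq, if_pos hEq.symm, hEq]
    · rw [if_neg hEq, if_neg (fun hc => hEq hc.symm)]⟩

lemma exists_safe_row (F : Finset (Sym2 (Fin w × Fin h))) (hcard : F.card < h) :
    ∃ r : Fin h, ∀ u v : Fin w × Fin h, s(u,v) ∈ F → u.2 = r → v.2 = r → False := by
  classical
  have hpos : 0 < h := lt_of_le_of_lt (Nat.zero_le _) hcard
  set d : Fin h := ⟨0, hpos⟩ with hd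
  set R : Finset (Fin h) := F.image (fun e => (rowOfEdge w h e).getD d) with hRdef
  have hRcard : R.card < h := lt_of_le_of_lt (Finset.card_image_le) hcard
  have : ∃ r : Fin h, r ∉ R := by
    by_contra hc
    push_neg at hc
    have : R = Finset.univ := Finset.eq_univ_iff_forall.mpr hc
    rw [this, Finset.card_univ, Fintype.card_fin] at hRcard
    omega
  obtain ⟨r, hr⟩ := this
  refine ⟨r, fun u v hmem hu hv => hr ?_⟩
  refine Finset.mem_image.mpr ⟨s(u,v), hmem, ?_⟩
  have : rowOfEdge w h s(u,v) = some r := by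
    rw [rowOfEdge, Sym2.lift_mk]
    dsimp only
    rw [if_pos (hu.trans hv.symm), hu]
  rw [this]; rfl

lemma exists_safe_col (F : Finset (Sym2 (Fin w × Fin h))) (hcard : F.card < w) :
    ∃ c : Fin w, ∀ u v : Fin w × Fin h, s(u,v) ∈ F → u.1 = c → v.1 = c → False := by
  classical
  have hpos : 0 < w := lt_of_le_of_lt (Nat.zero_le _) hcard
  set d : Fin w := ⟨0, hpos⟩ with hd
  set C : Finset (Fin w) := F.image (fun e => (colOfEdge w h e).getD d) with hCdef
  have hCcard : C.card < w := lt_of_le_of_lt (Finset.card_image_le) hcard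
  have : ∃ c : Fin w, c ∉ C := by
    by_contra hc
    push_neg at hc
    have : C = Finset.univ := Finset.eq_univ_iff_forall.mpr hc
    rw [this, Finset.card_univ, Fintype.card_fin] at hCcard
    omega
  obtain ⟨c, hc⟩ := this
  refine ⟨c, fun u v hmem hu hv => hc ?_⟩
  refine Finset.mem_image.mpr ⟨s(u,v), hmem, ?_⟩
  have : colOfEdge w h s(u,v) = some c := by
    rw [colOfEdge, Sym2.lift_mk]
    dsimp only
    rw [if_pos (hu.trans hv.symm), hu]
  rw [this]; rfl
end aux2

/-- Isoperimetric bound for rectangular grids (Papadimitriou–Sideri): in the `w × h` grid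
with `w > B` and `h > B`, deleting at most `B` edges separates at most `(B/2)²` vertices
from the component of some vertex (the largest component). -/
theorem stmt_10 (w h B : ℕ) (hB : 0 < B) (hw : B < w) (hh : B < h)
    (G : SimpleGraph (Fin w × Fin h))
    (hG : G = SimpleGraph.fromRel (fun u v =>
      (u.1 = v.1 ∧ (v.2 : ℕ) = (u.2 : ℕ) + 1) ∨
      (u.2 = v.2 ∧ (v.1 : ℕ) = (u.1 : ℕ) + 1)))
    (F : Finset (Sym2 (Fin w × Fin h))) (hFsub : ↑F ⊆ G.edgeSet) (hF : F.card ≤ B) :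
    ∃ v₀ : Fin w × Fin h,
      ({v | ¬ (G.deleteEdges ↑F).Reachable v₀ v}.ncard : ℝ) ≤ ((B : ℝ) / 2) ^ 2 := by
  classical
  have hG' : G = SimpleGraph.fromRel (gridRel w h) := hG
  clear hG
  subst hG'
  obtain ⟨r₀, hr₀⟩ := exists_safe_row F (lt_of_le_of_lt hF hh)
  obtain ⟨c₀, hc₀⟩ := exists_safe_col F (lt_of_le_of_lt hF hw)
  refine ⟨(c₀, r₀), ?_⟩
  set G' := (SimpleGraph.fromRel (gridRel w h)).deleteEdges ↑F with hG'def
  set Tf : Finset (Fin w × Fin h) :=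
    Finset.univ.filter (fun v => ¬ G'.Reachable (c₀, r₀) v) with hTfdef
  have hTset : {v | ¬ G'.Reachable (c₀, r₀) v} = ↑Tf := by
    ext v; simp [hTfdef]
  rw [hTset, Set.ncard_coe_finset]
  -- every vertex in Tf has a bad row and a bad column
  have hrowbad : ∀ p ∈ Tf, ∃ u v : Fin w × Fin h, s(u,v) ∈ F ∧ u.2 = p.2 ∧ v.2 = p.2 := by
    intro p hp
    rw [hTfdef, Finset.mem_filter] at hp
    by_contra hno
    push_neg at hno
    refine hp.2 ?_
    have hsafe : ∀ u v : Fin w × Fin h, s(u,v) ∈ F → u.2 = p.2 → v.2 = p.2 → False :=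
      fun u v hm hu hv => hno u v hm hu hv
    exact (grid_col_reach c₀ hc₀ r₀ p.2).trans (grid_row_reach p.2 hsafe c₀ p.1)
  have hcolbad : ∀ p ∈ Tf, ∃ u v : Fin w × Fin h, s(u,v) ∈ F ∧ u.1 = p.1 ∧ v.1 = p.1 := by
    intro p hp
    rw [hTfdef, Finset.mem_filter] at hp
    by_contra hno
    push_neg at hno
    refine hp.2 ?_
    have hsafe : ∀ u v : Fin w × Fin h, s(u,v) ∈ F → u.1 = p.1 → v.1 = p.1 → False :=
      fun u v hm hu hv => hno u v hm hu hv
    exact (grid_row_reach r₀ hr₀ c₀ p.1).trans (grid_col_reach p.1 hsafe r₀ p.2)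
  set R : Finset (Fin h) := Tf.image Prod.snd with hRdef
  set C : Finset (Fin w) := Tf.image Prod.fst with hCdef
  -- Tf fits in the product
  have hTsub : Tf ⊆ C ×ˢ R := by
    intro p hp
    rw [Finset.mem_product]
    exact ⟨Finset.mem_image_of_mem _ hp, Finset.mem_image_of_mem _ hp⟩
  have hTcard : Tf.card ≤ C.card * R.card := by
    calc Tf.card ≤ (C ×ˢ R).card := Finset.card_le_card hTsub
    _ = C.card * R.card := Finset.card_product _ _
  -- injections into F
  have hRP : ∀ r ∈ R, ∃ u v : Fin w × Fin h, s(u,v) ∈ F ∧ u.2 = r ∧ v.2 = r := by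
    intro r hr
    rw [hRdef, Finset.mem_image] at hr
    obtain ⟨p, hp, hpr⟩ := hr
    exact hpr ▸ hrowbad p hp
  have hCP : ∀ c ∈ C, ∃ u v : Fin w × Fin h, s(u,v) ∈ F ∧ u.1 = c ∧ v.1 = c := by
    intro c hc
    rw [hCdef, Finset.mem_image] at hc
    obtain ⟨p, hp, hpc⟩ := hc
    exact hpc ▸ hcolbad p hp
  set Prow : Fin h → Prop := fun r => ∃ u v : Fin w × Fin h, s(u,v) ∈ F ∧ u.2 = r ∧ v.2 = r
    with hProwdef
  set Pcol : Fin w → Prop := fun c => ∃ u v : Fin w × Fin h, s(u,v) ∈ F ∧ u.1 = c ∧ v.1 = c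
    with hPcoldef
  set f : Fin h → Sym2 (Fin w × Fin h) := fun r =>
    if hr : Prow r then s(hr.choose, hr.choose_spec.choose) else s((c₀, r₀), (c₀, r₀))
    with hfdef
  set g : Fin w → Sym2 (Fin w × Fin h) := fun c =>
    if hc : Pcol c then s(hc.choose, hc.choose_spec.choose) else s((c₀, r₀), (c₀, r₀))
    with hgdef
  have hfspec : ∀ r : Fin h, Prow r → f r ∈ F ∧ (∀ z ∈ f r, z.2 = r) ∧ ∃ z, z ∈ f r := by
    intro r hr
    rw [hfdef]
    dsimp only
    rw [dif_pos hr]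
    obtain ⟨h1, h2, h3⟩ := hr.choose_spec.choose_spec
    refine ⟨h1, fun z hz => ?_, ⟨hr.choose, Sym2.mem_mk_left _ _⟩⟩
    rcases Sym2.mem_iff.mp hz with rfl | rfl
    · exact h2
    · exact h3
  have hgspec : ∀ c : Fin w, Pcol c → g c ∈ F ∧ (∀ z ∈ g c, z.1 = c) ∧ ∃ z, z ∈ g c := by
    intro c hc
    rw [hgdef]
    dsimp only
    rw [dif_pos hc]
    obtain ⟨h1, h2, h3⟩ := hc.choose_spec.choose_spec
    refine ⟨h1, fun z hz => ?_, ⟨hc.choose, Sym2.mem_mk_left _ _⟩⟩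
    rcases Sym2.mem_iff.mp hz with rfl | rfl
    · exact h2
    · exact h3
  have hfinj : Set.InjOn f ↑R := by
    intro r1 hr1 r2 hr2 hf12
    obtain ⟨u, v, hm, hu, hv⟩ := hRP r1 hr1
    have h1 := hfspec r1 ⟨u, v, hm, hu, hv⟩
    have h2 := hfspec r2 (hRP r2 hr2)
    obtain ⟨z, hz⟩ := h1.2.2
    have ha := h1.2.1 z hz
    have hb := h2.2.1 z (hf12 ▸ hz)
    exact ha ▸ hb
  have hginj : Set.InjOn g ↑C := by
    intro c1 hc1 c2 hc2 hg12
    have h1 := hgspec c1 (hCP c1 hc1)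
    have h2 := hgspec c2 (hCP c2 hc2)
    obtain ⟨z, hz⟩ := h1.2.2
    have ha := h1.2.1 z hz
    have hb := h2.2.1 z (hg12 ▸ hz)
    exact ha ▸ hb
  have hdisj : Disjoint (R.image f) (C.image g) := by
    rw [Finset.disjoint_left]
    intro e he1 he2
    obtain ⟨r, hr, hfr⟩ := Finset.mem_image.mp he1
    obtain ⟨c, hc, hgc⟩ := Finset.mem_image.mp he2
    revert hfr hgc
    induction e using Sym2.ind with
    | _ u v =>
      intro hfr hgc
      have heF : s(u,v) ∈ F := hfr ▸ (hfspec r (hRP r hr)).1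
      have hadj : (SimpleGraph.fromRel (gridRel w h)).Adj u v :=
        (SimpleGraph.mem_edgeSet _).mp (hFsub heF)
      have hu2 : u.2 = r := (hfspec r (hRP r hr)).2.1 u
        (by rw [hfr]; exact Sym2.mem_mk_left u v)
      have hv2 : v.2 = r := (hfspec r (hRP r hr)).2.1 v
        (by rw [hfr]; exact Sym2.mem_mk_right u v)
      have hu1 : u.1 = c := (hgspec c (hCP c hc)).2.1 u
        (by rw [hgc]; exact Sym2.mem_mk_left u v)
      have hv1 : v.1 = c := (hgspec c (hCP c hc)).2.1 v
        (by rw [hgc]; exact Sym2.mem_mk_right u v)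
      have huv : u = v := Prod.ext_iff.mpr ⟨hu1.trans hv1.symm, hu2.trans hv2.symm⟩
      exact hadj.ne huv
  have himgsub : R.image f ∪ C.image g ⊆ F := by
    intro e he
    rcases Finset.mem_union.mp he with he | he
    · obtain ⟨r, hr, rfl⟩ := Finset.mem_image.mp he
      exact (hfspec r (hRP r hr)).1
    · obtain ⟨c, hc, rfl⟩ := Finset.mem_image.mp he
      exact (hgspec c (hCP c hc)).1
  have hsum : R.card + C.card ≤ B := by
    have h1 : (R.image f).card = R.card := Finset.card_image_of_injOn hfinj
    have h2 : (C.image g).card = C.card := Finset.card_image_of_injOn hginj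
    have h3 : (R.image f ∪ C.image g).card = (R.image f).card + (C.image g).card :=
      Finset.card_union_of_disjoint hdisj
    have h4 := Finset.card_le_card himgsub
    omega
  have hcast : (Tf.card : ℝ) ≤ (C.card : ℝ) * (R.card : ℝ) := by exact_mod_cast hTcard
  have hsum' : (C.card : ℝ) + (R.card : ℝ) ≤ (B : ℝ) := by
    exact_mod_cast (by omega : C.card + R.card ≤ B)
  nlinarith [sq_nonneg ((C.card : ℝ) - (R.card : ℝ)), hcast, hsum',
    Nat.cast_nonneg (α := ℝ) C.card, Nat.cast_nonneg (α := ℝ) R.card,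
    Nat.cast_nonneg (α := ℝ) B]
end

section
/- If from a graph on n vertices one can cut out any prescribed number of vertices using at most C·√n edges, then iterating k−1 times yields a partition into k sets each of size at most ⌈n/k⌉ using at most C·k·√n cut edges in total. -/
open SimpleGraph Finset

private lemma card_filter_coe_lt (k r : ℕ) (hr : r ≤ k) :
    (Finset.univ.filter (fun j : Fin k => (j : ℕ) < r)).card = r := by
  have h : ∀ m ∈ Finset.range r, m < k := fun m hm =>
    lt_of_lt_of_le (Finset.mem_range.mp hm) hr
  have : (Finset.univ.filter (fun j : Fin k => (j : ℕ) < r)) =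
      (Finset.range r).attachFin h := by
    ext j
    simp [Finset.mem_attachFin]
  rw [this, Finset.card_attachFin, Finset.card_range]

private lemma aux_partition (n : ℕ) (G : SimpleGraph (Fin n)) (C : ℝ) (hC : 0 < C)
    (hcut : ∀ (W : Finset (Fin n)) (t : ℕ), 1 ≤ t → t ≤ W.card →
      ∃ S : Finset (Fin n), S ⊆ W ∧ S.card = t ∧
        ({e ∈ G.edgeSet | ∃ u v, e = s(u, v) ∧ u ∈ S ∧ v ∈ W ∧ v ∉ S}.ncard : ℝ)
          ≤ C * Real.sqrt (W.card : ℝ)) :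
    ∀ (m : ℕ) (W : Finset (Fin n)) (sizes : Fin m → ℕ),
      (∀ i, 1 ≤ sizes i) → (∑ i, sizes i) = W.card →
      ∃ P : Fin m → Finset (Fin n),
        (∀ i, P i ⊆ W) ∧
        (∀ i j, i ≠ j → Disjoint (P i) (P j)) ∧
        (∀ i, (P i).card = sizes i) ∧
        (∀ v ∈ W, ∃ i, v ∈ P i) ∧
        ({e ∈ G.edgeSet | ∃ u v i j, e = s(u, v) ∧ i ≠ j ∧ u ∈ P i ∧ v ∈ P j}.ncard : ℝ)
          ≤ C * ((m - 1 : ℕ) : ℝ) * Real.sqrt n := by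
  intro m
  induction m with
  | zero =>
    intro W sizes h1 hsum
    refine ⟨fun _ => ∅, fun i => i.elim0, fun i => i.elim0, fun i => i.elim0, ?_, ?_⟩
    · intro v hv
      exfalso
      simp at hsum
      have hW : W = ∅ := Finset.card_eq_zero.mp hsum.symm
      simp [hW] at hv
    · have : {e ∈ G.edgeSet | ∃ u v, ∃ i : Fin 0, ∃ j : Fin 0,
          e = s(u, v) ∧ i ≠ j ∧ u ∈ (fun _ : Fin 0 => (∅ : Finset (Fin n))) i ∧
            v ∈ (fun _ : Fin 0 => (∅ : Finset (Fin n))) j} = ∅ := by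
        ext e
        simp only [Set.mem_setOf_eq, Set.mem_empty_iff_false, iff_false, not_and]
        rintro - ⟨u, v, i, -⟩
        exact i.elim0
      rw [this]
      simp
  | succ m ih =>
    intro W sizes h1 hsum
    rcases Nat.eq_zero_or_pos m with hm | hm
    · subst hm
      refine ⟨fun _ => W, fun i => subset_rfl, ?_, ?_, fun v hv => ⟨0, hv⟩, ?_⟩
      · intro i j hij
        exact absurd (Fin.ext (by omega)) hij
      · intro i
        have : i = 0 := Fin.ext (by omega)
        subst this
        rw [← hsum, Fin.sum_univ_one]
      · have : {e ∈ G.edgeSet | ∃ u v, ∃ i : Fin 1, ∃ j : Fin 1,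
            e = s(u, v) ∧ i ≠ j ∧ u ∈ W ∧ v ∈ W} = ∅ := by
          ext e
          simp only [Set.mem_setOf_eq, Set.mem_empty_iff_false, iff_false, not_and]
          rintro - ⟨u, v, i, j, -, hij, -⟩
          exact hij (Fin.ext (by omega))
        rw [this]
        simp
    · -- m ≥ 1: cut out a piece of size `sizes 0`, recurse
      have ht1 : 1 ≤ sizes 0 := h1 0
      have htW : sizes 0 ≤ W.card := by
        rw [← hsum, Fin.sum_univ_succ]
        exact Nat.le_add_right _ _
      obtain ⟨S, hSW, hScard, hSbound⟩ := hcut W (sizes 0) ht1 htW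
      set W' := W \ S with hW'
      have hW'card : W'.card = W.card - sizes 0 := by
        rw [hW', Finset.card_sdiff_of_subset hSW, hScard]
      have hsum' : (∑ i : Fin m, sizes i.succ) = W'.card := by
        rw [hW'card, ← hsum, Fin.sum_univ_succ]
        omega
      obtain ⟨P', hP'W, hP'disj, hP'card, hP'cov, hP'bound⟩ :=
        ih W' (fun i => sizes i.succ) (fun i => h1 i.succ) hsum'
      refine ⟨Fin.cases S P', ?_, ?_, ?_, ?_, ?_⟩
      · intro i
        rcases Fin.eq_zero_or_eq_succ i with rfl | ⟨i', rfl⟩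
        · exact hSW
        · simpa using (hP'W i').trans (Finset.sdiff_subset)
      · intro i j hij
        rcases Fin.eq_zero_or_eq_succ i with rfl | ⟨i', rfl⟩ <;>
          rcases Fin.eq_zero_or_eq_succ j with rfl | ⟨j', rfl⟩
        · exact absurd rfl hij
        · simp only [Fin.cases_zero, Fin.cases_succ]
          exact Finset.disjoint_left.mpr fun a haS haP =>
            (Finset.mem_sdiff.mp (hP'W j' haP)).2 haS
        · simp only [Fin.cases_zero, Fin.cases_succ]
          exact Finset.disjoint_left.mpr fun a haP haS =>
            (Finset.mem_sdiff.mp (hP'W i' haP)).2 haS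
        · simp only [Fin.cases_succ]
          exact hP'disj i' j' (fun h => hij (congrArg Fin.succ h))
      · intro i
        rcases Fin.eq_zero_or_eq_succ i with rfl | ⟨i', rfl⟩
        · simpa using hScard
        · simpa using hP'card i'
      · intro v hv
        by_cases hvS : v ∈ S
        · exact ⟨0, hvS⟩
        · obtain ⟨i, hi⟩ := hP'cov v (Finset.mem_sdiff.mpr ⟨hv, hvS⟩)
          exact ⟨i.succ, by simpa using hi⟩
      · -- cut bound
        have hsub : {e ∈ G.edgeSet | ∃ u v i j, e = s(u, v) ∧ i ≠ j ∧
              u ∈ (Fin.cases S P' : Fin (m+1) → Finset (Fin n)) i ∧ v ∈ (Fin.cases S P' : Fin (m+1) → Finset (Fin n)) j}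
            ⊆ {e ∈ G.edgeSet | ∃ u v, e = s(u, v) ∧ u ∈ S ∧ v ∈ W ∧ v ∉ S}
              ∪ {e ∈ G.edgeSet | ∃ u v i j, e = s(u, v) ∧ i ≠ j ∧ u ∈ P' i ∧ v ∈ P' j} := by
          rintro e ⟨he, u, v, i, j, hequv, hij, hu, hv⟩
          rcases Fin.eq_zero_or_eq_succ i with rfl | ⟨i', rfl⟩ <;>
            rcases Fin.eq_zero_or_eq_succ j with rfl | ⟨j', rfl⟩
          · exact absurd rfl hij
          · simp only [Fin.cases_zero] at hu
            simp only [Fin.cases_succ] at hv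
            have hvW' := hP'W j' hv
            rw [Finset.mem_sdiff] at hvW'
            exact Or.inl ⟨he, u, v, hequv, hu, hvW'.1, hvW'.2⟩
          · simp only [Fin.cases_succ] at hu
            simp only [Fin.cases_zero] at hv
            have huW' := hP'W i' hu
            rw [Finset.mem_sdiff] at huW'
            exact Or.inl ⟨he, v, u, by rw [hequv, Sym2.eq_swap], hv, huW'.1, huW'.2⟩
          · simp only [Fin.cases_succ] at hu hv
            exact Or.inr ⟨he, u, v, i', j', hequv, fun h => hij (congrArg Fin.succ h), hu, hv⟩
        have hW_le_n : (W.card : ℝ) ≤ (n : ℝ) := by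
          have : W.card ≤ n := by simpa using Finset.card_le_univ W
          exact_mod_cast this
        have hsqrt : Real.sqrt (W.card : ℝ) ≤ Real.sqrt n := Real.sqrt_le_sqrt hW_le_n
        calc ({e ∈ G.edgeSet | ∃ u v i j, e = s(u, v) ∧ i ≠ j ∧
                u ∈ (Fin.cases S P' : Fin (m+1) → Finset (Fin n)) i ∧ v ∈ (Fin.cases S P' : Fin (m+1) → Finset (Fin n)) j}.ncard : ℝ)
            ≤ (({e ∈ G.edgeSet | ∃ u v, e = s(u, v) ∧ u ∈ S ∧ v ∈ W ∧ v ∉ S}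
                ∪ {e ∈ G.edgeSet | ∃ u v i j, e = s(u, v) ∧ i ≠ j ∧ u ∈ P' i ∧ v ∈ P' j}).ncard : ℝ) := by
              exact_mod_cast Nat.cast_le.mpr (Set.ncard_le_ncard hsub (Set.toFinite _))
          _ ≤ ({e ∈ G.edgeSet | ∃ u v, e = s(u, v) ∧ u ∈ S ∧ v ∈ W ∧ v ∉ S}.ncard : ℝ)
              + ({e ∈ G.edgeSet | ∃ u v i j, e = s(u, v) ∧ i ≠ j ∧ u ∈ P' i ∧ v ∈ P' j}.ncard : ℝ) := by
              exact_mod_cast Nat.cast_le.mpr (Set.ncard_union_le _ _)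
          _ ≤ C * Real.sqrt (W.card : ℝ) + C * ((m - 1 : ℕ) : ℝ) * Real.sqrt n := by
              exact add_le_add hSbound hP'bound
          _ ≤ C * Real.sqrt n + C * ((m - 1 : ℕ) : ℝ) * Real.sqrt n := by
              have := mul_le_mul_of_nonneg_left hsqrt hC.le
              linarith
          _ = C * ((m + 1 - 1 : ℕ) : ℝ) * Real.sqrt n := by
              have : ((m + 1 - 1 : ℕ) : ℝ) = ((m - 1 : ℕ) : ℝ) + 1 := by
                have h2 : m + 1 - 1 = (m - 1) + 1 := by omega
                rw [h2]; push_cast; ring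
              rw [this]; ring

/-- Abstract iteration lemma: if from every induced subgraph (vertex set `W`) one can cut
out any prescribed number `t` of vertices with edge boundary at most `C·√|W|`, then there
is a partition into `k` near-equal parts (each of size `⌊n/k⌋` or `⌈n/k⌉`) cutting at most
`C·(k-1)·√n ≤ C·k·√n` edges. -/
theorem stmt_15 (n k : ℕ) (hn : 0 < n) (hk : 0 < k) (hkn : k ≤ n)
    (G : SimpleGraph (Fin n)) (C : ℝ) (hC : 0 < C)
    (hcut : ∀ (W : Finset (Fin n)) (t : ℕ), 1 ≤ t → t ≤ W.card →
      ∃ S : Finset (Fin n), S ⊆ W ∧ S.card = t ∧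
        ({e ∈ G.edgeSet | ∃ u v, e = s(u, v) ∧ u ∈ S ∧ v ∈ W ∧ v ∉ S}.ncard : ℝ)
          ≤ C * Real.sqrt (W.card : ℝ)) :
    ∃ c : Fin n → Fin k,
      (∀ j : Fin k, n / k ≤ (univ.filter (fun v => c v = j)).card ∧
        (univ.filter (fun v => c v = j)).card ≤ ⌈(n : ℚ) / k⌉₊) ∧
      ({e ∈ G.edgeSet | ∃ u v, e = s(u, v) ∧ c u ≠ c v}.ncard : ℝ)
        ≤ C * ((k : ℝ) - 1) * Real.sqrt n ∧
      C * ((k : ℝ) - 1) * Real.sqrt n ≤ C * k * Real.sqrt n := by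
  -- sizes for the parts
  set sizes : Fin k → ℕ := fun j => if (j : ℕ) < n % k then n / k + 1 else n / k with hsizes
  have h1 : ∀ j, 1 ≤ sizes j := by
    intro j
    have hdiv : 1 ≤ n / k := Nat.one_le_div_iff hk |>.mpr hkn
    simp only [hsizes]
    split <;> omega
  have hsum : (∑ j, sizes j) = (Finset.univ : Finset (Fin n)).card := by
    rw [Finset.card_univ, Fintype.card_fin]
    have hstep : ∀ j : Fin k, sizes j = n / k + (if (j : ℕ) < n % k then 1 else 0) := by
      intro j
      simp only [hsizes]
      split <;> simp
    calc (∑ j, sizes j) = ∑ j : Fin k, (n / k + (if (j : ℕ) < n % k then 1 else 0)) := by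
          exact Finset.sum_congr rfl fun j _ => hstep j
      _ = k * (n / k) + (Finset.univ.filter (fun j : Fin k => (j : ℕ) < n % k)).card := by
          rw [Finset.sum_add_distrib, Finset.sum_const, Finset.card_univ, Fintype.card_fin,
            smul_eq_mul, Finset.card_filter]
      _ = k * (n / k) + n % k := by
          rw [card_filter_coe_lt k (n % k) (Nat.mod_lt n hk).le]
      _ = n := by
          have := Nat.div_add_mod n k
          omega
  obtain ⟨P, hPW, hPdisj, hPcard, hPcov, hPbound⟩ :=
    aux_partition n G C hC hcut k Finset.univ sizes h1 hsum
  have hcov : ∀ v : Fin n, ∃ i, v ∈ P i := fun v => hPcov v (Finset.mem_univ v)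
  choose c hc using hcov
  have hfilter : ∀ j : Fin k, Finset.univ.filter (fun v => c v = j) = P j := by
    intro j
    ext v
    simp only [Finset.mem_filter, Finset.mem_univ, true_and]
    constructor
    · rintro rfl
      exact hc v
    · intro hv
      by_contra hne
      exact Finset.disjoint_left.mp (hPdisj (c v) j hne) (hc v) hv
  have hceil_lower : n / k ≤ ⌈(n : ℚ) / k⌉₊ := by
    have h1' : ((n / k : ℕ) : ℚ) ≤ (n : ℚ) / k := Nat.cast_div_le
    have h2' : (n : ℚ) / k ≤ (⌈(n : ℚ) / k⌉₊ : ℚ) := Nat.le_ceil _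
    exact_mod_cast h1'.trans h2'
  have hceil_upper : n % k ≠ 0 → n / k + 1 ≤ ⌈(n : ℚ) / k⌉₊ := by
    intro hmod
    rw [Nat.succ_le_iff, Nat.lt_ceil]
    rw [lt_div_iff₀ (by exact_mod_cast hk : (0 : ℚ) < k)]
    have h := Nat.div_add_mod n k
    have hq : ((k * (n / k) + n % k : ℕ) : ℚ) = (n : ℚ) := Nat.cast_inj.mpr h
    push_cast at hq
    have hmpos : (1 : ℚ) ≤ ((n % k : ℕ) : ℚ) := by exact_mod_cast Nat.one_le_iff_ne_zero.mpr hmod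
    push_cast at hmpos
    nlinarith
  refine ⟨c, ?_, ?_, ?_⟩
  · intro j
    rw [hfilter j, hPcard j]
    constructor
    · simp only [hsizes]; split <;> omega
    · simp only [hsizes]
      split
      · rename_i h
        exact hceil_upper (by omega)
      · exact hceil_lower
  · have hsub : {e ∈ G.edgeSet | ∃ u v, e = s(u, v) ∧ c u ≠ c v}
        ⊆ {e ∈ G.edgeSet | ∃ u v i j, e = s(u, v) ∧ i ≠ j ∧ u ∈ P i ∧ v ∈ P j} := by
      rintro e ⟨he, u, v, hequv, hne⟩
      exact ⟨he, u, v, c u, c v, hequv, hne, hc u, hc v⟩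
    have hle : ({e ∈ G.edgeSet | ∃ u v, e = s(u, v) ∧ c u ≠ c v}.ncard : ℝ)
        ≤ ({e ∈ G.edgeSet | ∃ u v i j, e = s(u, v) ∧ i ≠ j ∧ u ∈ P i ∧ v ∈ P j}.ncard : ℝ) := by
      exact_mod_cast Nat.cast_le.mpr (Set.ncard_le_ncard hsub (Set.toFinite _))
    have hcast : ((k - 1 : ℕ) : ℝ) = (k : ℝ) - 1 := by
      rw [Nat.cast_sub hk]; simp
    rw [← hcast]
    exact hle.trans hPbound
  · have h1' : (k : ℝ) - 1 ≤ (k : ℝ) := by linarith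
    have := Real.sqrt_nonneg (n : ℝ)
    nlinarith
end
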